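/- arXiv:math/0607508 — 7 statements merged into one kernel-verified Lean document; each statement's English description precedes it below -/
import Mathlib

section
/- Let R be a commutative ring, M a finite free R-module, and N an R-submodule of the endomorphism ring End_R(M) that is closed under composition (f ∘ g ∈ N whenever f, g ∈ N). If u ∈ End_R(M) is a unit of End_R(M) and u − 1 ∈ N, then u⁻¹ − 1 ∈ N. -/
/-- If `N` is a submodule of the endomorphism ring of a finite free module `M`
which is closed under composition, and `u` is a unit of `End R M` with `u - 1 ∈ N`,
then `u⁻¹ - 1 ∈ N`. -/
theorem stmt_0 {R M : Type*} [CommRing R] [AddCommGroup M] [Module R M]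
    [Module.Free R M] [Module.Finite R M]
    (N : Submodule R (Module.End R M))
    (hN : ∀ f ∈ N, ∀ g ∈ N, f * g ∈ N)
    (u : (Module.End R M)ˣ)
    (hu : (u : Module.End R M) - 1 ∈ N) :
    ((u⁻¹ : (Module.End R M)ˣ) : Module.End R M) - 1 ∈ N := by
  set v : Module.End R M := ((u⁻¹ : (Module.End R M)ˣ) : Module.End R M) with hv
  set T : Submodule R (Module.End R M) := N ⊔ Submodule.span R {(1 : Module.End R M)} with hT
  -- powers of u lie in T
  have hpow : ∀ k : ℕ, ((u : Module.End R M))^k ∈ T := by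
    intro k
    induction k with
    | zero =>
      simp only [pow_zero]
      exact Submodule.mem_sup_right (Submodule.mem_span_singleton_self _)
    | succ k ih =>
      rw [pow_succ]
      rcases Submodule.mem_sup.mp ih with ⟨m, hm, s, hs, heq⟩
      rcases Submodule.mem_span_singleton.mp hs with ⟨r, hr⟩
      rw [← heq, ← hr]
      have : (m + r • 1) * (u : Module.End R M)
          = (m * ((u : Module.End R M) - 1) + m + r • ((u : Module.End R M) - 1)) + r • 1 := by
        simp only [add_mul, smul_mul_assoc, one_mul, mul_sub, smul_sub, mul_one]
        abel
      rw [this]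
      exact Submodule.add_mem _
        (Submodule.mem_sup_left (Submodule.add_mem _
          (Submodule.add_mem _ (hN m hm _ hu) hm) (Submodule.smul_mem _ _ hu)))
        (Submodule.mem_sup_right (Submodule.mem_span_singleton.mpr ⟨r, rfl⟩))
  -- v is integral
  obtain ⟨q, qmonic, qzero⟩ := LinearMap.isIntegral v
  rw [← Polynomial.aeval_def] at qzero
  rcases Nat.eq_zero_or_pos q.natDegree with h0 | hposd
  · -- q = 1, so the ring is trivial
    have hc : q.coeff 0 = 1 := by rw [← h0]; exact qmonic.coeff_natDegree
    have hq1 : q = 1 := by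
      rw [Polynomial.eq_C_of_natDegree_eq_zero h0, hc, map_one]
    rw [hq1, map_one] at qzero
    have : Subsingleton (Module.End R M) := subsingleton_of_zero_eq_one qzero.symm
    rw [Subsingleton.elim (v - 1) 0]
    exact N.zero_mem
  · obtain ⟨k, hk⟩ : ∃ k, q.natDegree = k + 1 :=
      ⟨q.natDegree - 1, (Nat.succ_pred_eq_of_pos hposd).symm⟩
    have hcancel : ∀ i ≤ k, (u : Module.End R M)^k * v ^ i = ((u : Module.End R M))^(k - i) := by
      intro i hi
      have h1 : (u : Module.End R M)^k
          = ((u : Module.End R M))^(k-i) * ((u : Module.End R M))^i := by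
        rw [← pow_add, Nat.sub_add_cancel hi]
      have h2 : ((u : Module.End R M))^i * v ^ i = 1 := by
        rw [hv, ← Units.val_pow_eq_pow_val, ← Units.val_pow_eq_pow_val, ← Units.val_mul,
          inv_pow, mul_inv_cancel, Units.val_one]
      rw [h1, mul_assoc, h2, mul_one]
    have hsum : (0 : Module.End R M)
        = ∑ i ∈ Finset.range (q.natDegree + 1), q.coeff i • v ^ i := by
      rw [← qzero, Polynomial.aeval_eq_sum_range]
    have hmul : (0 : Module.End R M)
        = ∑ i ∈ Finset.range (q.natDegree + 1),
            q.coeff i • ((u : Module.End R M)^k * v ^ i) := by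
      calc (0 : Module.End R M) = (u : Module.End R M)^k * 0 := by rw [mul_zero]
        _ = _ := by
          rw [hsum, Finset.mul_sum]
          exact Finset.sum_congr rfl fun i _ => (mul_smul_comm _ _ _)
    have htop : (u : Module.End R M)^k * v ^ q.natDegree = v := by
      rw [hk, pow_succ, ← mul_assoc, hcancel k le_rfl, Nat.sub_self, pow_zero, one_mul]
    have hveq : v = -∑ i ∈ Finset.range q.natDegree,
        q.coeff i • ((u : Module.End R M))^(k - i) := by
      rw [Finset.sum_range_succ, htop, qmonic.coeff_natDegree, one_smul] at hmul
      have h2 : v = -∑ i ∈ Finset.range q.natDegree,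
          q.coeff i • ((u : Module.End R M)^k * v ^ i) :=
        eq_neg_of_add_eq_zero_right hmul.symm
      rw [h2, neg_inj]
      refine Finset.sum_congr rfl fun i hi => ?_
      have hik : i ≤ k := by have := Finset.mem_range.mp hi; omega
      rw [hcancel i hik]
    have hvT : v ∈ T := by
      rw [hveq]
      exact Submodule.neg_mem _ (Submodule.sum_mem _ fun i _ =>
        Submodule.smul_mem _ _ (hpow _))
    rcases Submodule.mem_sup.mp hvT with ⟨m, hm, s, hs, heq⟩
    rcases Submodule.mem_span_singleton.mp hs with ⟨r, hr⟩
    have key : v - 1 = -(v * ((u : Module.End R M) - 1)) := by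
      have : v * (u : Module.End R M) = 1 := by
        rw [hv, ← Units.val_mul, inv_mul_cancel, Units.val_one]
      rw [mul_sub, this, mul_one, neg_sub]
    rw [key, ← heq, ← hr]
    have : (m + r • 1) * ((u : Module.End R M) - 1)
        = m * ((u : Module.End R M) - 1) + r • ((u : Module.End R M) - 1) := by
      rw [add_mul, smul_mul_assoc, one_mul]
    rw [this]
    exact Submodule.neg_mem _ (Submodule.add_mem _ (hN m hm _ hu) (Submodule.smul_mem _ _ hu))
end

section
/- Let R be a commutative ring, n, m ∈ ℕ, and S := MvPowerSeries (Fin n) R the ring of formal power series in n variables over R. Let Φ : S →+* S be a ring homomorphism such that for every i : Fin n, the constant coefficient of Φ(X i) is 0. Let g ∈ S be an element with constant coefficient 0, let a : Matrix (Fin m) (Fin m) S, and let b : Fin m → S. Then there exists a unique w : Fin m → S such that for every j : Fin m one has b j + w j = ∑_{l : Fin m} a j l * Φ (w l) * g. -/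
open MvPowerSeries Finsupp

namespace Stmt3Aux

variable {R : Type*} [CommRing R] {n : ℕ}

/-- The ideal generated by the variables. -/
noncomputable def I (R : Type*) [CommRing R] (n : ℕ) : Ideal (MvPowerSeries (Fin n) R) :=
  Ideal.span (Set.range (MvPowerSeries.X : Fin n → MvPowerSeries (Fin n) R))

lemma degree_add (a b : Fin n →₀ ℕ) : (a + b).degree = a.degree + b.degree := by
  simp only [degree_eq_weight_one, map_add]

lemma degree_single_one (i : Fin n) : (single i 1 : Fin n →₀ ℕ).degree = 1 := by
  classical
  simp [Finsupp.degree_apply, Finsupp.support_single_ne_zero i one_ne_zero]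

lemma constantCoeff_of_mem {s : MvPowerSeries (Fin n) R} (hs : s ∈ I R n) :
    constantCoeff s = 0 := by
  have : I R n ≤ RingHom.ker (constantCoeff) := by
    rw [I, Ideal.span_le]
    rintro _ ⟨i, rfl⟩
    simp [RingHom.mem_ker]
  exact this hs

lemma coeff_eq_zero_of_mem_pow :
    ∀ (d : ℕ) (s : MvPowerSeries (Fin n) R), s ∈ I R n ^ d →
      ∀ μ : Fin n →₀ ℕ, μ.degree < d → coeff μ s = 0 := by
  intro d
  induction d with
  | zero => intro s _ μ hμ; exact absurd hμ (Nat.not_lt_zero _)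
  | succ d ih =>
    intro s hs
    rw [pow_succ] at hs
    refine Submodule.mul_induction_on hs ?_ ?_
    · intro x hx y hy μ hμ
      classical
      rw [coeff_mul]
      apply Finset.sum_eq_zero
      rintro ⟨α, β⟩ hab
      rw [Finset.HasAntidiagonal.mem_antidiagonal] at hab
      by_cases hβ : β = 0
      · have h0 : coeff β y = 0 := by
          rw [hβ]; exact constantCoeff_of_mem hy
        rw [h0, mul_zero]
      · have h1 : 1 ≤ β.degree := by
          rcases Nat.eq_zero_or_pos β.degree with h | h
          · exact absurd ((degree_eq_zero_iff β).mp h) hβ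
          · exact h
        have hdeg : α.degree + β.degree = μ.degree := by
          rw [← degree_add, hab]
        have hα : α.degree < d := by omega
        rw [ih x hx α hα, zero_mul]
    · intro x y hx hy μ hμ
      rw [map_add, hx μ hμ, hy μ hμ, add_zero]

lemma mem_pow_of_coeff :
    ∀ (d : ℕ) (s : MvPowerSeries (Fin n) R),
      (∀ μ : Fin n →₀ ℕ, μ.degree < d → coeff μ s = 0) → s ∈ I R n ^ d := by
  classical
  intro d
  induction d with
  | zero => intro s _; simp [pow_zero, Ideal.one_eq_top]
  | succ d ih =>
    intro s hs
    -- decompose s = ∑ i, X i * t i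
    set t : Fin n → MvPowerSeries (Fin n) R := fun i =>
      (fun ν => if ∀ j < i, ν j = 0 then coeff (ν + single i 1) s else 0) with ht
    have hcoefft : ∀ (i : Fin n) (ν : Fin n →₀ ℕ),
        coeff ν (t i) = if ∀ j < i, ν j = 0 then coeff (ν + single i 1) s else 0 := by
      intro i ν; rfl
    have hterm : ∀ (i : Fin n) (μ : Fin n →₀ ℕ),
        coeff μ (MvPowerSeries.X i * t i) =
          if single i 1 ≤ μ then coeff (μ - single i 1) (t i) else 0 := by
      intro i μ
      rw [X_def, coeff_monomial_mul]
      split_ifs <;> simp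
    have hdecomp : s = ∑ i : Fin n, MvPowerSeries.X i * t i := by
      apply MvPowerSeries.ext
      intro μ
      rw [map_sum]
      by_cases hμ : μ = 0
      · subst hμ
        have h0 : coeff (0 : Fin n →₀ ℕ) s = 0 := by
          apply hs; simp
        rw [h0]
        symm
        apply Finset.sum_eq_zero
        intro i _
        rw [hterm]
        rw [if_neg]
        simp [Finsupp.single_le_iff]
      · have hsupp : μ.support.Nonempty := Finsupp.support_nonempty_iff.mpr hμ
        set i0 := μ.support.min' hsupp with hi0
        have hi0mem : i0 ∈ μ.support := Finset.min'_mem _ _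
        have hi0ne : μ i0 ≠ 0 := Finsupp.mem_support_iff.mp hi0mem
        rw [Finset.sum_eq_single i0]
        · rw [hterm]
          have hle : single i0 1 ≤ μ := Finsupp.single_le_iff.mpr (Nat.one_le_iff_ne_zero.mpr hi0ne)
          rw [if_pos hle, hcoefft, if_pos, tsub_add_cancel_of_le hle]
          intro j hj
          have hjns : j ∉ μ.support := fun hjs => absurd (Finset.min'_le _ _ hjs) (not_le.mpr hj)
          have hjz : μ j = 0 := Finsupp.notMem_support_iff.mp hjns
          simp [Finsupp.tsub_apply, hjz]
        · intro i _ hne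
          rw [hterm]
          split_ifs with h1
          · rw [hcoefft]
            rw [if_neg]
            intro hall
            rcases lt_trichotomy i i0 with hlt | heq | hgt
            · -- i < i0 : then μ i ≥ 1, so i ∈ support, contradicting minimality
              have : 1 ≤ μ i := Finsupp.single_le_iff.mp h1
              have : i ∈ μ.support := Finsupp.mem_support_iff.mpr (by omega)
              exact absurd (Finset.min'_le _ _ this) (not_le.mpr hlt)
            · exact hne heq
            · -- i0 < i : then (μ - single i 1) i0 = μ i0 ≠ 0
              have := hall i0 hgt
              rw [Finsupp.tsub_apply, Finsupp.single_apply,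
                if_neg hne] at this
              omega
          · rfl
        · intro h; exact absurd (Finset.mem_univ i0) h
    -- membership
    rw [hdecomp]
    apply Ideal.sum_mem
    intro i _
    have hti : t i ∈ I R n ^ d := by
      apply ih
      intro ν hν
      rw [hcoefft]
      split_ifs with h
      · apply hs
        rw [degree_add, degree_single_one]
        omega
      · rfl
    have hXi : MvPowerSeries.X i ∈ I R n := Ideal.subset_span ⟨i, rfl⟩
    rw [pow_succ']
    exact Ideal.mul_mem_mul hXi hti

lemma mem_I_of_constantCoeff {s : MvPowerSeries (Fin n) R}
    (hs : constantCoeff s = 0) : s ∈ I R n := by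
  have := mem_pow_of_coeff 1 s ?_
  · rwa [pow_one] at this
  · intro μ hμ
    have : μ.degree = 0 := by omega
    rw [(degree_eq_zero_iff μ).mp this]
    exact hs

lemma map_mem_pow (Φ : MvPowerSeries (Fin n) R →+* MvPowerSeries (Fin n) R)
    (hΦ : ∀ i : Fin n, constantCoeff (Φ (MvPowerSeries.X i)) = 0)
    {d : ℕ} {s : MvPowerSeries (Fin n) R} (hs : s ∈ I R n ^ d) :
    Φ s ∈ I R n ^ d := by
  have hmap : Ideal.map Φ (I R n) ≤ I R n := by
    rw [I, Ideal.map_span, Ideal.span_le]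
    rintro _ ⟨_, ⟨i, rfl⟩, rfl⟩
    exact mem_I_of_constantCoeff (hΦ i)
  have h1 : Φ s ∈ Ideal.map Φ (I R n ^ d) := Ideal.mem_map_of_mem Φ hs
  rw [Ideal.map_pow] at h1
  exact Ideal.pow_right_mono hmap d h1

end Stmt3Aux

/-- In the power series ring `S = R[[x_1,…,x_n]]`, given a ring endomorphism `Φ`
sending each variable into the ideal of positive-order series, an element `g`
with zero constant coefficient, a matrix `a` and a vector `b`, the system
`b j + w j = ∑ l, a j l * Φ (w l) * g` has a unique solution `w`. -/
theorem stmt_3 {R : Type*} [CommRing R] (n m : ℕ)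
    (Φ : MvPowerSeries (Fin n) R →+* MvPowerSeries (Fin n) R)
    (hΦ : ∀ i : Fin n, MvPowerSeries.constantCoeff (Φ (MvPowerSeries.X i)) = 0)
    (g : MvPowerSeries (Fin n) R)
    (hg : MvPowerSeries.constantCoeff g = 0)
    (a : Matrix (Fin m) (Fin m) (MvPowerSeries (Fin n) R))
    (b : Fin m → MvPowerSeries (Fin n) R) :
    ∃! w : Fin m → MvPowerSeries (Fin n) R,
      ∀ j : Fin m, b j + w j = ∑ l : Fin m, a j l * Φ (w l) * g := by
  classical
  open Stmt3Aux in
  -- the contraction operator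
  set T : (Fin m → MvPowerSeries (Fin n) R) → (Fin m → MvPowerSeries (Fin n) R) :=
    fun w j => -b j + ∑ l : Fin m, a j l * Φ (w l) * g with hT
  have hgI : g ∈ I R n := mem_I_of_constantCoeff hg
  have hTd : ∀ w w' (j : Fin m),
      T w j - T w' j = ∑ l : Fin m, a j l * Φ (w l - w' l) * g := by
    intro w w' j
    rw [show T w j - T w' j =
        (∑ l : Fin m, a j l * Φ (w l) * g) - (∑ l : Fin m, a j l * Φ (w' l) * g) by
      simp only [hT]; ring, ← Finset.sum_sub_distrib]
    refine Finset.sum_congr rfl fun l _ => ?_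
    rw [map_sub]; ring
  have key : ∀ (d : ℕ) (w w' : Fin m → MvPowerSeries (Fin n) R),
      (∀ l, w l - w' l ∈ I R n ^ d) → ∀ j, T w j - T w' j ∈ I R n ^ (d + 1) := by
    intro d w w' h j
    rw [hTd]
    apply Ideal.sum_mem
    intro l _
    have h1 : Φ (w l - w' l) ∈ I R n ^ d := map_mem_pow Φ hΦ (h l)
    have h2 : Φ (w l - w' l) * g ∈ I R n ^ (d + 1) := by
      rw [pow_succ]
      exact Ideal.mul_mem_mul h1 hgI
    rw [mul_assoc]
    exact Ideal.mul_mem_left _ _ h2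
  -- the iterates
  set u : ℕ → (Fin m → MvPowerSeries (Fin n) R) := fun k => T^[k] (fun _ => 0) with hu
  have husucc : ∀ k, u (k + 1) = T (u k) := by
    intro k; simp only [hu, Function.iterate_succ_apply']
  have step : ∀ k l, u (k + 1) l - u k l ∈ I R n ^ k := by
    intro k
    induction k with
    | zero => intro l; simp [Ideal.one_eq_top]
    | succ k ih =>
      intro l
      have := key k (u (k + 1)) (u k) ih l
      rwa [← husucc (k + 1), ← husucc k] at this
  have diff : ∀ k k', k ≤ k' → ∀ l, u k' l - u k l ∈ I R n ^ k := by
    intro k k' hk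
    induction k' , hk using Nat.le_induction with
    | base => intro l; simp
    | succ k' hk ih =>
      intro l
      have : u (k' + 1) l - u k l = (u (k' + 1) l - u k' l) + (u k' l - u k l) := by ring
      rw [this]
      exact Ideal.add_mem _ (Ideal.pow_le_pow_right hk (step k' l)) (ih l)
  have stab : ∀ (k k' : ℕ) (l : Fin m) (μ : Fin n →₀ ℕ), μ.degree < k → k ≤ k' →
      MvPowerSeries.coeff μ (u k' l) = MvPowerSeries.coeff μ (u k l) := by
    intro k k' l μ hμ hk
    have := coeff_eq_zero_of_mem_pow k _ (diff k k' hk l) μ hμ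
    rw [map_sub, sub_eq_zero] at this
    exact this
  -- the limit
  set w : Fin m → MvPowerSeries (Fin n) R :=
    fun j => (fun μ => MvPowerSeries.coeff μ (u (μ.degree + 1) j)) with hwdef
  have hwcoeff : ∀ (j : Fin m) (μ : Fin n →₀ ℕ),
      MvPowerSeries.coeff μ (w j) = MvPowerSeries.coeff μ (u (μ.degree + 1) j) := by
    intro j μ; rfl
  have hw : ∀ (k : ℕ) (j : Fin m) (μ : Fin n →₀ ℕ), μ.degree < k →
      MvPowerSeries.coeff μ (w j) = MvPowerSeries.coeff μ (u k j) := by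
    intro k j μ hμ
    rw [hwcoeff]
    rcases le_total (μ.degree + 1) k with h | h
    · rw [stab (μ.degree + 1) k j μ (Nat.lt_succ_self _) h]
    · rw [stab k (μ.degree + 1) j μ hμ h]
  -- w is a fixed point
  have hwu : ∀ d (l : Fin m), w l - u d l ∈ I R n ^ d := by
    intro d l
    apply mem_pow_of_coeff
    intro μ hμ
    rw [map_sub, hw d l μ hμ, sub_self]
  have hfix : T w = w := by
    funext j
    apply MvPowerSeries.ext
    intro μ
    set d := μ.degree with hd
    have h1 : MvPowerSeries.coeff μ (w j) = MvPowerSeries.coeff μ (u (d + 2) j) :=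
      hw (d + 2) j μ (by omega)
    have h2 : u (d + 2) = T (u (d + 1)) := husucc (d + 1)
    have h3 : T w j - T (u (d + 1)) j ∈ I R n ^ (d + 2) :=
      key (d + 1) w (u (d + 1)) (hwu (d + 1)) j
    have h4 : MvPowerSeries.coeff μ (T w j - T (u (d + 1)) j) = 0 :=
      coeff_eq_zero_of_mem_pow (d + 2) _ h3 μ (by omega)
    rw [map_sub, sub_eq_zero] at h4
    rw [h4, h1, h2]
  -- translate fixed points into solutions of the system
  have hiff : ∀ w' : Fin m → MvPowerSeries (Fin n) R,
      (∀ j, b j + w' j = ∑ l : Fin m, a j l * Φ (w' l) * g) ↔ T w' = w' := by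
    intro w'
    constructor
    · intro h
      funext j
      simp only [hT, ← h j]
      ring
    · intro h j
      have := congrFun h j
      simp only [hT] at this
      rw [← this]
      ring
  refine ⟨w, (hiff w).mpr hfix, ?_⟩
  intro w' hw'
  have hfix' : T w' = w' := (hiff w').mp hw'
  have hall : ∀ d (l : Fin m), w' l - w l ∈ I R n ^ d := by
    intro d
    induction d with
    | zero => intro l; simp [Ideal.one_eq_top]
    | succ d ih =>
      intro l
      have := key d w' w ih l
      rwa [hfix, hfix'] at this
  funext l
  apply MvPowerSeries.ext
  intro μ
  have := coeff_eq_zero_of_mem_pow (μ.degree + 1) _ (hall (μ.degree + 1) l) μ (by omega)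
  rw [map_sub, sub_eq_zero] at this
  exact this
end

section
/- Let p be a prime and R a commutative ring that is complete and separated for the p-adic topology, i.e., IsAdicComplete (Ideal.span {(p : R)}) R holds. Let σ : R →+* R be a ring endomorphism, r ∈ ℕ, M := Fin r → R the free R-module of rank r, and Φ : M →ₛₗ[σ] M a σ-semilinear additive map. Let u : ℕ → (Module.End R M)ˣ be a sequence of invertible R-linear endomorphisms of M such that: (i) for every i ∈ ℕ and every v ∈ M, Φ ((u (i+1)) v) = (u i) (Φ v); and (ii) for every j ∈ ℕ there exists N ∈ ℕ such that for all i ≥ N the endomorphism (u i : Module.End R M) − 1 lies in (p : R)^j • (⊤ : Submodule R (Module.End R M)). Then there exists a unit g of Module.End R M such that g ((u 0) (Φ v)) = Φ (g v) for every v ∈ M, i.e., g ∘ (u 0) ∘ Φ = Φ ∘ g as maps M → M. -/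
set_option maxHeartbeats 1000000
set_option synthInstance.maxHeartbeats 400000


open Pointwise

private lemma stmt4_mem_smul_top_iff {R : Type*} [CommRing R] {M : Type*} [AddCommGroup M]
    [Module R M] (c : R) (x : M) :
    x ∈ (c • ⊤ : Submodule R M) ↔ ∃ y, x = c • y := by
  constructor
  · intro h
    rw [← SetLike.mem_coe, Submodule.coe_pointwise_smul] at h
    obtain ⟨y, -, hy⟩ := h
    exact ⟨y, hy.symm⟩
  · rintro ⟨y, rfl⟩
    exact Submodule.smul_mem_pointwise_smul y _ ⊤ trivial

private lemma stmt4_mem_span_pow_smul_top_iff {R : Type*} [CommRing R] {M : Type*}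
    [AddCommGroup M] [Module R M] (c : R) (n : ℕ) (x : M) :
    x ∈ (Ideal.span {c} ^ n • ⊤ : Submodule R M) ↔ ∃ y, x = c ^ n • y := by
  rw [Ideal.span_singleton_pow, Submodule.ideal_span_singleton_smul]
  exact stmt4_mem_smul_top_iff _ _

private lemma stmt4_dsum {R : Type*} [CommRing R] {M : Type*} [AddCommGroup M] [Module R M]
    (c : R) {ι : Type*} (s : Finset ι) (f : ι → M)
    (h : ∀ i ∈ s, ∃ y, f i = c • y) : ∃ y, ∑ i ∈ s, f i = c • y := by
  classical
  induction s using Finset.cons_induction with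
  | empty => exact ⟨0, by simp⟩
  | cons a s ha ih =>
    obtain ⟨y1, hy1⟩ := h a (by simp)
    obtain ⟨y2, hy2⟩ := ih fun i hi => h i (by simp [hi])
    exact ⟨y1 + y2, by rw [Finset.sum_cons, hy1, hy2, smul_add]⟩

private lemma stmt4_geom_tel {A : Type*} [Ring A] (q : A) (n : ℕ) :
    (1 + q) * (∑ k ∈ Finset.range n, (-q) ^ k) = 1 - (-q) ^ n ∧
    (∑ k ∈ Finset.range n, (-q) ^ k) * (1 + q) = 1 - (-q) ^ n := by
  induction n with
  | zero => simp
  | succ n ih =>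
    have hcomm : q * (-q) ^ n = (-q) ^ n * q :=
      (((Commute.refl q).neg_right).pow_right n).eq
    have hpow : (1 : A) - (-q) ^ (n + 1) = 1 + (-q) ^ n * q := by
      rw [pow_succ, mul_neg, sub_neg_eq_add]
    constructor
    · rw [Finset.sum_range_succ, mul_add, ih.1, hpow, add_mul, one_mul]
      rw [hcomm]
      abel
    · rw [Finset.sum_range_succ, add_mul, ih.2, hpow, mul_add, mul_one]
      abel

private lemma stmt4_unit_one_add {R : Type*} [CommRing R] {A : Type*} [Ring A] [Algebra R A]
    (c : R)
    (haus : ∀ x : A, (∀ n : ℕ, ∃ y, x = c ^ n • y) → x = 0)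
    (prec : ∀ f : ℕ → A, (∀ m n : ℕ, m ≤ n → ∃ y, f n - f m = c ^ m • y) →
      ∃ L, ∀ n, ∃ y, f n - L = c ^ n • y)
    (x : A) : IsUnit (1 + c • x) := by
  set q : A := c • x with hq
  have hpow : ∀ m k : ℕ, m ≤ k → ∃ y, (-q) ^ k = c ^ m • y := by
    intro m k hmk
    refine ⟨c ^ (k - m) • ((-1 : A) ^ k * x ^ k), ?_⟩
    rw [smul_smul, ← pow_add, Nat.add_sub_cancel' hmk, neg_pow, hq, smul_pow, mul_smul_comm]
  obtain ⟨y0, hy0⟩ := prec (fun n => ∑ k ∈ Finset.range n, (-q) ^ k) (by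
    intro m n hmn
    have hsub := Finset.sum_Ico_eq_sub (fun k => (-q) ^ k) hmn
    rw [← hsub]
    exact stmt4_dsum (c ^ m) _ _ (fun k hk => hpow m k (Finset.mem_Ico.1 hk).1))
  have h1 : (1 + q) * y0 = 1 := by
    rw [← sub_eq_zero]
    apply haus
    intro n
    obtain ⟨z, hz⟩ := hy0 n
    obtain ⟨z', hz'⟩ := hpow n n le_rfl
    refine ⟨(1 + q) * (-z) + (-z'), ?_⟩
    have hexp : (1 + q) * y0 - 1
        = (1 + q) * (y0 - (∑ k ∈ Finset.range n, (-q) ^ k))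
          + ((1 + q) * (∑ k ∈ Finset.range n, (-q) ^ k) - 1) := by
      noncomm_ring
    have hy : y0 - (∑ k ∈ Finset.range n, (-q) ^ k) = c ^ n • (-z) := by
      rw [smul_neg, ← hz]; abel
    rw [hexp, hy, (stmt4_geom_tel q n).1, mul_smul_comm, smul_add, smul_neg, hz']
    abel
  have h2 : y0 * (1 + q) = 1 := by
    rw [← sub_eq_zero]
    apply haus
    intro n
    obtain ⟨z, hz⟩ := hy0 n
    obtain ⟨z', hz'⟩ := hpow n n le_rfl
    refine ⟨(-z) * (1 + q) + (-z'), ?_⟩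
    have hexp : y0 * (1 + q) - 1
        = (y0 - (∑ k ∈ Finset.range n, (-q) ^ k)) * (1 + q)
          + ((∑ k ∈ Finset.range n, (-q) ^ k) * (1 + q) - 1) := by
      noncomm_ring
    have hy : y0 - (∑ k ∈ Finset.range n, (-q) ^ k) = c ^ n • (-z) := by
      rw [smul_neg, ← hz]; abel
    rw [hexp, hy, (stmt4_geom_tel q n).2, smul_mul_assoc, smul_add, smul_neg, hz']
    abel
  exact ⟨⟨1 + q, y0, h1, h2⟩, rfl⟩

/-- Over a `p`-adically complete ring `R`, given a `σ`-semilinear map `Φ` on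
`M = Fin r → R` and a sequence of units `u i` of `End R M` with
`Φ ∘ (u (i+1)) = (u i) ∘ Φ` and `u i → 1` `p`-adically, there is a unit `g`
with `g ∘ u 0 ∘ Φ = Φ ∘ g`. -/
theorem stmt_4 {R : Type*} [CommRing R] (p : ℕ) (hp : p.Prime)
    (hR : IsAdicComplete (Ideal.span {(p : R)}) R)
    (σ : R →+* R) (r : ℕ)
    (Φ : (Fin r → R) →ₛₗ[σ] (Fin r → R))
    (u : ℕ → (Module.End R (Fin r → R))ˣ)
    (h1 : ∀ i : ℕ, ∀ v : Fin r → R,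
      Φ ((u (i + 1) : Module.End R (Fin r → R)) v)
        = (u i : Module.End R (Fin r → R)) (Φ v))
    (h2 : ∀ j : ℕ, ∃ N : ℕ, ∀ i ≥ N,
      (u i : Module.End R (Fin r → R)) - 1
        ∈ (p : R) ^ j • (⊤ : Submodule R (Module.End R (Fin r → R)))) :
    ∃ g : (Module.End R (Fin r → R))ˣ, ∀ v : Fin r → R,
      (g : Module.End R (Fin r → R)) ((u 0 : Module.End R (Fin r → R)) (Φ v))
        = Φ ((g : Module.End R (Fin r → R)) v) := by
  classical
  -- Hausdorff and precompleteness, in explicit divisibility form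
  have hausR : ∀ x : R, (∀ n : ℕ, ∃ y, x = (p : R) ^ n * y) → x = 0 := by
    intro x hx
    refine hR.toIsHausdorff.haus x fun n => ?_
    rw [SModEq.zero, stmt4_mem_span_pow_smul_top_iff]
    obtain ⟨y, hy⟩ := hx n
    exact ⟨y, by rw [smul_eq_mul]; exact hy⟩
  have precR : ∀ s : ℕ → R, (∀ m n : ℕ, m ≤ n → ∃ y, s n - s m = (p : R) ^ m * y) →
      ∃ L, ∀ n, ∃ y, s n - L = (p : R) ^ n * y := by
    intro s hs
    obtain ⟨L, hL⟩ := hR.toIsPrecomplete.prec (f := s) (by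
      intro m n hmn
      rw [SModEq.sub_mem, stmt4_mem_span_pow_smul_top_iff]
      obtain ⟨y, hy⟩ := hs m n hmn
      exact ⟨-y, by rw [smul_neg, smul_eq_mul, ← hy]; abel⟩)
    refine ⟨L, fun n => ?_⟩
    have hmem := (SModEq.sub_mem).1 (hL n)
    rw [stmt4_mem_span_pow_smul_top_iff] at hmem
    obtain ⟨y, hy⟩ := hmem
    exact ⟨y, by rw [← smul_eq_mul, ← hy]⟩
  have hausM : ∀ x : Fin r → R, (∀ n : ℕ, ∃ y, x = (p : R) ^ n • y) → x = 0 := by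
    intro x hx
    funext i
    show x i = 0
    refine hausR (x i) fun n => ?_
    obtain ⟨y, hy⟩ := hx n
    exact ⟨y i, by rw [hy]; rfl⟩
  have hausE : ∀ x : Module.End R (Fin r → R),
      (∀ n : ℕ, ∃ y, x = (p : R) ^ n • y) → x = 0 := by
    intro x hx
    apply LinearMap.ext
    intro v
    rw [LinearMap.zero_apply]
    refine hausM (x v) fun n => ?_
    obtain ⟨y, hy⟩ := hx n
    exact ⟨y v, by rw [hy]; rfl⟩
  have precE : ∀ f : ℕ → Module.End R (Fin r → R),
      (∀ m n : ℕ, m ≤ n → ∃ y, f n - f m = (p : R) ^ m • y) →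
      ∃ L, ∀ n, ∃ y, f n - L = (p : R) ^ n • y := by
    intro f hf
    have hscalar : ∀ ij : Fin r × Fin r, ∃ L, ∀ n, ∃ y,
        LinearMap.toMatrix' (f n) ij.1 ij.2 - L = (p : R) ^ n * y := by
      intro ij
      apply precR
      intro m n hmn
      obtain ⟨y, hy⟩ := hf m n hmn
      refine ⟨LinearMap.toMatrix' y ij.1 ij.2, ?_⟩
      have hmat : LinearMap.toMatrix' (f n) - LinearMap.toMatrix' (f m)
          = (p : R) ^ m • LinearMap.toMatrix' y := by
        rw [← map_sub LinearMap.toMatrix' (f n) (f m), hy, map_smul]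
      calc LinearMap.toMatrix' (f n) ij.1 ij.2 - LinearMap.toMatrix' (f m) ij.1 ij.2
          = (LinearMap.toMatrix' (f n) - LinearMap.toMatrix' (f m)) ij.1 ij.2 := by
            simp [Matrix.sub_apply]
        _ = ((p : R) ^ m • LinearMap.toMatrix' y) ij.1 ij.2 := by rw [hmat]
        _ = (p : R) ^ m * LinearMap.toMatrix' y ij.1 ij.2 := by
            simp [Matrix.smul_apply, smul_eq_mul]
    choose Lm hLm using hscalar
    refine ⟨Matrix.toLin' (Matrix.of fun i j => Lm (i, j)), fun n => ?_⟩
    have hentry : ∀ ij : Fin r × Fin r, ∃ y,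
        LinearMap.toMatrix' (f n) ij.1 ij.2 - Lm ij = (p : R) ^ n * y :=
      fun ij => hLm ij n
    choose cm hcm using hentry
    refine ⟨Matrix.toLin' (Matrix.of fun i j => cm (i, j)), ?_⟩
    have hfn : f n = Matrix.toLin' (LinearMap.toMatrix' (f n)) :=
      (Matrix.toLin'_toMatrix' _).symm
    rw [hfn, ← map_smul, ← map_sub]
    apply congrArg
    ext i j
    have := hcm (i, j)
    simp only [Matrix.sub_apply, Matrix.smul_apply, Matrix.of_apply, smul_eq_mul]
    exact this
  -- translate h2
  have h2' : ∀ j : ℕ, ∃ N : ℕ, ∀ i : ℕ, N ≤ i →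
      ∃ y, (u i : Module.End R (Fin r → R)) - 1 = (p : R) ^ j • y := by
    intro j
    obtain ⟨N, hN⟩ := h2 j
    exact ⟨N, fun i hi => (stmt4_mem_smul_top_iff _ _).1 (hN i hi)⟩
  choose t ht using h2'
  set N : ℕ → ℕ := fun j => (Finset.range (j + 1)).sup t with hNdef
  have htN : ∀ j, t j ≤ N j := fun j =>
    Finset.le_sup (Finset.mem_range.2 (Nat.lt_succ_self j))
  have hNmono : ∀ a b : ℕ, a ≤ b → N a ≤ N b := fun a b h =>
    Finset.sup_mono (Finset.range_subset_range.2 (by omega))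
  -- the partial products
  obtain ⟨w, hw0, hwS⟩ : ∃ w : ℕ → (Module.End R (Fin r → R))ˣ,
      w 0 = 1 ∧ ∀ n, w (n + 1) = u (n + 1) * w n :=
    ⟨fun n => Nat.rec 1 (fun n wn => u (n + 1) * wn) n, rfl, fun n => rfl⟩
  have hwval : ∀ n, ((w (n + 1) : Module.End R (Fin r → R)))
      = (u (n + 1) : Module.End R (Fin r → R)) * (w n : Module.End R (Fin r → R)) := by
    intro n; rw [hwS n, Units.val_mul]
  have star : ∀ n (v : Fin r → R),
      (w n : Module.End R (Fin r → R)) ((u 0 : Module.End R (Fin r → R)) (Φ v))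
        = Φ ((w (n + 1) : Module.End R (Fin r → R)) v) := by
    intro n
    induction n with
    | zero =>
      intro v
      rw [hw0, hwS 0, hw0, mul_one, Units.val_one, Module.End.one_apply]
      exact (h1 0 v).symm
    | succ n ih =>
      intro v
      rw [hwval (n + 1), hwval n, Module.End.mul_apply, Module.End.mul_apply, ← hwval n, ih v,
        h1 (n + 1)]
  -- products of units close to 1 are close to each other
  have Dprod : ∀ j m n : ℕ, m ≤ n →
      (∀ i, m < i → i ≤ n → ∃ y, (u i : Module.End R (Fin r → R)) - 1 = (p : R) ^ j • y) →
      ∃ y, (w n : Module.End R (Fin r → R)) - (w m : Module.End R (Fin r → R))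
        = (p : R) ^ j • y := by
    intro j m n hmn h
    induction n, hmn using Nat.le_induction with
    | base => exact ⟨0, by simp⟩
    | succ n hmn ih =>
      obtain ⟨y2, hy2⟩ := ih (fun i hi1 hi2 => h i hi1 (by omega))
      obtain ⟨y1, hy1⟩ := h (n + 1) (by omega) le_rfl
      refine ⟨y1 * (w n : Module.End R (Fin r → R)) + y2, ?_⟩
      have hsplit : (w (n + 1) : Module.End R (Fin r → R)) - w m
          = ((u (n + 1) : Module.End R (Fin r → R)) - 1) * (w n : Module.End R (Fin r → R))
            + ((w n : Module.End R (Fin r → R)) - w m) := by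
        rw [hwval n, sub_mul, one_mul, sub_add_sub_cancel]
      rw [hsplit, hy1, hy2, smul_mul_assoc, smul_add]
  have Dsym : ∀ j a b : ℕ, N j ≤ a → N j ≤ b →
      ∃ y, (w a : Module.End R (Fin r → R)) - (w b : Module.End R (Fin r → R))
        = (p : R) ^ j • y := by
    intro j a b ha hb
    have key : ∀ a b : ℕ, N j ≤ a → a ≤ b →
        ∃ y, (w b : Module.End R (Fin r → R)) - (w a : Module.End R (Fin r → R))
          = (p : R) ^ j • y := by
      intro a b ha hab
      exact Dprod j a b hab (fun i hi1 hi2 => ht j i (by have := htN j; omega))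
    rcases le_total a b with h | h
    · obtain ⟨y, hy⟩ := key a b ha h
      exact ⟨-y, by rw [smul_neg, ← hy]; abel⟩
    · exact key b a hb h
  -- limit of the partial products
  obtain ⟨L, hL⟩ := precE (fun j => (w (N j) : Module.End R (Fin r → R))) (by
    intro m n hmn
    exact Dsym m (N n) (N m) (hNmono m n hmn) le_rfl)
  have hclose : ∀ j n : ℕ, N j ≤ n →
      ∃ y, (w n : Module.End R (Fin r → R)) - L = (p : R) ^ j • y := by
    intro j n hn
    obtain ⟨y1, hy1⟩ := Dsym j n (N (max j n)) hn (hNmono j (max j n) (le_max_left j n))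
    obtain ⟨y2, hy2⟩ := hL (max j n)
    refine ⟨y1 + (p : R) ^ (max j n - j) • y2, ?_⟩
    have hsplit : (w n : Module.End R (Fin r → R)) - L
        = ((w n : Module.End R (Fin r → R)) - (w (N (max j n)) : Module.End R (Fin r → R)))
          + ((w (N (max j n)) : Module.End R (Fin r → R)) - L) := by abel
    rw [hsplit, hy1, hy2, smul_add, smul_smul, ← pow_add,
      Nat.add_sub_cancel' (le_max_left j n)]
  -- L is a unit
  obtain ⟨y, hy⟩ := hclose 1 (N 1) le_rfl
  have hL1 : L = (w (N 1) : Module.End R (Fin r → R))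
      * (1 + (p : R) • ((((w (N 1))⁻¹ : (Module.End R (Fin r → R))ˣ)
          : Module.End R (Fin r → R)) * (-y))) := by
    rw [pow_one] at hy
    rw [mul_add, mul_one, mul_smul_comm, ← mul_assoc, Units.mul_inv,
      one_mul, smul_neg, ← hy]
    abel
  have hunit : IsUnit L := by
    rw [hL1]
    exact (Units.isUnit (w (N 1))).mul (stmt4_unit_one_add (p : R) hausE precE _)
  obtain ⟨g, hg⟩ := hunit
  refine ⟨g, fun v => ?_⟩
  rw [hg]
  rw [← sub_eq_zero]
  apply hausM
  intro j
  obtain ⟨y1, hy1⟩ := hclose j (N j) le_rfl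
  obtain ⟨y2, hy2⟩ := hclose j (N j + 1) (Nat.le_succ _)
  refine ⟨-(y1 ((u 0 : Module.End R (Fin r → R)) (Φ v))) + Φ (y2 v), ?_⟩
  calc L ((u 0 : Module.End R (Fin r → R)) (Φ v)) - Φ (L v)
      = -(((w (N j) : Module.End R (Fin r → R)) - L)
            ((u 0 : Module.End R (Fin r → R)) (Φ v)))
        + ((w (N j) : Module.End R (Fin r → R)) ((u 0 : Module.End R (Fin r → R)) (Φ v))
            - Φ ((w (N j + 1) : Module.End R (Fin r → R)) v))
        + Φ (((w (N j + 1) : Module.End R (Fin r → R)) - L) v) := by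
        simp only [LinearMap.sub_apply, map_sub]
        abel
    _ = -(((p : R) ^ j • y1) ((u 0 : Module.End R (Fin r → R)) (Φ v)))
        + 0 + Φ (((p : R) ^ j • y2) v) := by
        rw [hy1, hy2, star (N j) v, sub_self]
    _ = (p : R) ^ j • (-(y1 ((u 0 : Module.End R (Fin r → R)) (Φ v))) + Φ (y2 v)) := by
        rw [LinearMap.smul_apply, LinearMap.smul_apply, LinearMap.map_smulₛₗ,
          map_pow, map_natCast, smul_add, smul_neg, add_zero]
end

section
/- Let R be a commutative ring, p a prime number, σ : R ≃+* R a ring automorphism, and M an R-module. Let θ : M →ₛₗ[σ] M be a σ-semilinear map and η : M →ₛₗ[σ⁻¹] M a σ⁻¹-semilinear map such that θ(η x) = (p : R) • x and η(θ x) = (p : R) • x for all x ∈ M. Let V be an R-submodule of M with θ v ∈ V for every v ∈ V. Then the set E(V) := {x ∈ V | for all q ∈ ℕ, η^[q] x ∈ V} is an R-submodule of M; it satisfies θ x ∈ E(V) and η x ∈ E(V) for every x ∈ E(V); and it is the largest such submodule: every R-submodule E₀ ≤ V with θ(E₀) ⊆ E₀ and η(E₀) ⊆ E₀ satisfies E₀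 ≤ E(V). -/
/-- Given a `σ`-semilinear `θ` and a `σ⁻¹`-semilinear `η` on `M` with
`θ ∘ η = η ∘ θ = p • id`, and a submodule `V` stable under `θ`, the set
`E(V) = {x ∈ V | ∀ q, η^[q] x ∈ V}` is an `R`-submodule, stable under both
`θ` and `η`, and is the largest submodule of `V` stable under both. -/
theorem stmt_5 {R M : Type*} [CommRing R] [AddCommGroup M] [Module R M]
    (p : ℕ) (hp : p.Prime) (σ : R ≃+* R)
    (θ : M →ₛₗ[(σ : R →+* R)] M) (η : M →ₛₗ[(σ.symm : R →+* R)] M)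
    (hθη : ∀ x : M, θ (η x) = (p : R) • x)
    (hηθ : ∀ x : M, η (θ x) = (p : R) • x)
    (V : Submodule R M) (hV : ∀ v ∈ V, θ v ∈ V) :
    ∃ E : Submodule R M,
      (E : Set M) = {x | x ∈ V ∧ ∀ q : ℕ, (⇑η)^[q] x ∈ V} ∧
      (∀ x ∈ E, θ x ∈ E ∧ η x ∈ E) ∧
      (∀ E₀ : Submodule R M, E₀ ≤ V →
        (∀ x ∈ E₀, θ x ∈ E₀) → (∀ x ∈ E₀, η x ∈ E₀) → E₀ ≤ E) := by
  -- iterate of η is additive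
  have hadd : ∀ q : ℕ, ∀ x y : M, (⇑η)^[q] (x + y) = (⇑η)^[q] x + (⇑η)^[q] y := by
    intro q
    induction q with
    | zero => intro x y; simp
    | succ n ih =>
      intro x y
      simp only [Function.iterate_succ_apply, map_add]
      exact ih _ _
  have hzero : ∀ q : ℕ, (⇑η)^[q] (0 : M) = 0 := by
    intro q
    induction q with
    | zero => simp
    | succ n ih => simp [Function.iterate_succ_apply, ih]
  have hsmul : ∀ q : ℕ, ∀ (r : R) (x : M), ∃ s : R, (⇑η)^[q] (r • x) = s • (⇑η)^[q] x := by
    intro q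
    induction q with
    | zero => intro r x; exact ⟨r, rfl⟩
    | succ n ih =>
      intro r x
      obtain ⟨s, hs⟩ := ih (σ.symm r) (η x)
      refine ⟨s, ?_⟩
      simp only [Function.iterate_succ_apply]
      rw [map_smulₛₗ]
      exact hs
  refine ⟨{ carrier := {x | x ∈ V ∧ ∀ q : ℕ, (⇑η)^[q] x ∈ V}
            add_mem' := ?_
            zero_mem' := ?_
            smul_mem' := ?_ }, rfl, ?_, ?_⟩
  · rintro a b ⟨ha, ha'⟩ ⟨hb, hb'⟩
    exact ⟨V.add_mem ha hb, fun q => by rw [hadd]; exact V.add_mem (ha' q) (hb' q)⟩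
  · exact ⟨V.zero_mem, fun q => by rw [hzero]; exact V.zero_mem⟩
  · rintro r x ⟨hx, hx'⟩
    refine ⟨V.smul_mem r hx, fun q => ?_⟩
    obtain ⟨s, hs⟩ := hsmul q r x
    rw [hs]; exact V.smul_mem s (hx' q)
  · rintro x ⟨hx, hx'⟩
    constructor
    · refine ⟨hV x hx, fun q => ?_⟩
      cases q with
      | zero => exact hV x hx
      | succ n =>
        have : (⇑η)^[n + 1] (θ x) = (⇑η)^[n] ((p : R) • x) := by
          rw [Function.iterate_succ_apply, hηθ]
        rw [this]
        obtain ⟨s, hs⟩ := hsmul n (p : R) x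
        rw [hs]; exact V.smul_mem s (hx' n)
    · exact ⟨hx' 1, fun q => by rw [← Function.iterate_succ_apply]; exact hx' (q + 1)⟩
  · intro E₀ hle hθ₀ hη₀ x hx
    refine ⟨hle hx, fun q => hle ?_⟩
    induction q with
    | zero => exact hx
    | succ n ih => rw [Function.iterate_succ_apply']; exact hη₀ _ ih
end

section
/- Let R be a commutative ring, p a prime number, σ : R ≃+* R a ring automorphism, and M an R-module. Let θ : M →ₛₗ[σ] M be a σ-semilinear map and η : M →ₛₗ[σ⁻¹] M a σ⁻¹-semilinear map such that θ(η x) = (p : R) • x and η(θ x) = (p : R) • x for all x ∈ M. Let V be an R-submodule of M with η v ∈ V for every v ∈ V. Then the set E₊(V) := {x ∈ V | for all q ∈ ℕ, θ^[q] x ∈ V} is an R-submodule of M; it satisfies θ x ∈ E₊(V) and η x ∈ E₊(V) for every x ∈ E₊(V); and it is the largest such submodule: every R-submodule E₀ ≤ V with θ(E₀) ⊆ E₀ and η(E₀) ⊆ E₀ satisfies E₀ ≤ E₊(V). -/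
/-- Given a `σ`-semilinear `θ` and a `σ⁻¹`-semilinear `η` on `M` with
`θ ∘ η = η ∘ θ = p • id`, and a submodule `V` stable under `η`, the set
`E₊(V) = {x ∈ V | ∀ q, θ^[q] x ∈ V}` is an `R`-submodule, stable under both
`θ` and `η`, and is the largest submodule of `V` stable under both. -/
theorem stmt_6 {R M : Type*} [CommRing R] [AddCommGroup M] [Module R M]
    (p : ℕ) (hp : p.Prime) (σ : R ≃+* R)
    (θ : M →ₛₗ[(σ : R →+* R)] M) (η : M →ₛₗ[(σ.symm : R →+* R)] M)
    (hθη : ∀ x : M, θ (η x) = (p : R) • x)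
    (hηθ : ∀ x : M, η (θ x) = (p : R) • x)
    (V : Submodule R M) (hV : ∀ v ∈ V, η v ∈ V) :
    ∃ E : Submodule R M,
      (E : Set M) = {x | x ∈ V ∧ ∀ q : ℕ, (⇑θ)^[q] x ∈ V} ∧
      (∀ x ∈ E, θ x ∈ E ∧ η x ∈ E) ∧
      (∀ E₀ : Submodule R M, E₀ ≤ V →
        (∀ x ∈ E₀, θ x ∈ E₀) → (∀ x ∈ E₀, η x ∈ E₀) → E₀ ≤ E) := by
  have hadd : ∀ (q : ℕ) (x y : M), (⇑θ)^[q] (x + y) = (⇑θ)^[q] x + (⇑θ)^[q] y := by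
    intro q
    induction q with
    | zero => intro x y; simp
    | succ n ih => intro x y; simp [Function.iterate_succ_apply', ih, map_add]
  have hzero : ∀ q : ℕ, (⇑θ)^[q] (0 : M) = 0 := by
    intro q
    induction q with
    | zero => simp
    | succ n ih => simp [Function.iterate_succ_apply', ih]
  have hsmul : ∀ (q : ℕ) (r : R) (x : M),
      (⇑θ)^[q] (r • x) = ((⇑σ)^[q] r) • (⇑θ)^[q] x := by
    intro q
    induction q with
    | zero => intro r x; simp
    | succ n ih =>
      intro r x
      simp only [Function.iterate_succ_apply', ih]
      rw [LinearMap.map_smulₛₗ]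
      rfl
  have hnat : ∀ q : ℕ, (⇑σ)^[q] ((p : R)) = (p : R) := by
    intro q
    induction q with
    | zero => rfl
    | succ n ih => simp [Function.iterate_succ_apply', ih]
  refine ⟨{ carrier := {x | x ∈ V ∧ ∀ q : ℕ, (⇑θ)^[q] x ∈ V}
            add_mem' := ?_
            zero_mem' := ?_
            smul_mem' := ?_ }, rfl, ?_, ?_⟩
  · rintro x y ⟨hx, hx'⟩ ⟨hy, hy'⟩
    exact ⟨V.add_mem hx hy, fun q => by rw [hadd]; exact V.add_mem (hx' q) (hy' q)⟩
  · exact ⟨V.zero_mem, fun q => by rw [hzero]; exact V.zero_mem⟩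
  · rintro r x ⟨hx, hx'⟩
    exact ⟨V.smul_mem r hx, fun q => by rw [hsmul]; exact V.smul_mem _ (hx' q)⟩
  · rintro x ⟨hx, hx'⟩
    refine ⟨⟨hx' 1, fun q => ?_⟩, ⟨hV x hx, fun q => ?_⟩⟩
    · rw [← Function.iterate_succ_apply]; exact hx' (q + 1)
    · cases q with
      | zero => exact hV x hx
      | succ n =>
        rw [Function.iterate_succ_apply, hθη, hsmul, hnat]
        exact V.smul_mem _ (hx' n)
  · intro E₀ hle hθ0 hη0 x hx
    have key : ∀ q : ℕ, (⇑θ)^[q] x ∈ E₀ := by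
      intro q
      induction q with
      | zero => exact hx
      | succ n ih => rw [Function.iterate_succ_apply']; exact hθ0 _ ih
    exact ⟨hle hx, fun q => hle (key q)⟩
end

section
/- Let R be a commutative ring, n ∈ ℕ, S := MvPowerSeries (Fin n) R, and let p ∈ ℕ with 2 ≤ p. Let Φ : S →+* S be a ring homomorphism with Φ(X i) = (X i)^p for every i : Fin n. Let m ∈ ℕ, A : Matrix (Fin m) (Fin m) S, and f : Fin m → S such that every component f j has constant coefficient 0. If f j = ∑_{l : Fin m} A j l * Φ (f l) for every j : Fin m, then f = 0. -/
open MvPowerSeries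

namespace Stmt9Aux

variable {R : Type*} [CommRing R] {n : ℕ}

/-- degree of a multi-index -/
noncomputable def deg (d : Fin n →₀ ℕ) : ℕ := d.sum fun _ e => e

lemma deg_add (u v : Fin n →₀ ℕ) : deg (u + v) = deg u + deg v := by
  simp [deg, Finsupp.sum_add_index']

lemma deg_eq_zero_iff (d : Fin n →₀ ℕ) : deg d = 0 ↔ d = 0 := by
  simp only [deg, Finsupp.sum, Finset.sum_eq_zero_iff, Finsupp.mem_support_iff]
  constructor
  · intro h
    ext i
    by_cases hi : d i = 0
    · simpa using hi
    · exact absurd (h i hi) hi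
  · rintro rfl; simp

/-- the ideal generated by the variables -/
noncomputable def J (R : Type*) [CommRing R] (n : ℕ) : Ideal (MvPowerSeries (Fin n) R) :=
  Ideal.span (Set.range (X : Fin n → MvPowerSeries (Fin n) R))

lemma constantCoeff_eq_zero_of_mem_J {g : MvPowerSeries (Fin n) R} (hg : g ∈ J R n) :
    constantCoeff g = 0 := by
  have : J R n ≤ RingHom.ker (constantCoeff) := by
    rw [J, Ideal.span_le]
    rintro _ ⟨i, rfl⟩
    simp [RingHom.mem_ker]
  exact this hg

/-- auxiliary series: the monomials of `g` whose minimal variable is `i`, divided by `X i` -/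
noncomputable def hAux (g : MvPowerSeries (Fin n) R) (i : Fin n) : MvPowerSeries (Fin n) R :=
  fun e => if ∀ j, j < i → e j = 0 then coeff (e + Finsupp.single i 1) g else 0

lemma coeff_hAux (g : MvPowerSeries (Fin n) R) (i : Fin n) (e : Fin n →₀ ℕ) :
    coeff e (hAux g i) =
      if ∀ j, j < i → e j = 0 then coeff (e + Finsupp.single i 1) g else 0 := rfl

/-- a power series with zero constant coefficient lies in the ideal generated by
the variables. -/
lemma mem_J_of_constantCoeff_eq_zero {g : MvPowerSeries (Fin n) R}
    (hg : constantCoeff g = 0) : g ∈ J R n := by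
  classical
  have key : g = ∑ i : Fin n, X i * hAux g i := by
    ext d
    rw [map_sum]
    have hXmul : ∀ i : Fin n, coeff d (X i * hAux g i) =
        if Finsupp.single i 1 ≤ d then coeff (d - Finsupp.single i 1) (hAux g i) else 0 := by
      intro i
      rw [X, coeff_monomial_mul, one_mul]
    by_cases hd : d = 0
    · subst hd
      rw [Finset.sum_eq_zero]
      · simpa using hg
      · intro i _
        rw [hXmul i, if_neg]
        intro hle
        have := hle i
        simp [Finsupp.single_apply] at this
    · -- d ≠ 0 : exactly the minimal element of the support contributes
      have hsupp : d.support.Nonempty := by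
        rw [Finsupp.support_nonempty_iff]; exact hd
      set i₀ := d.support.min' hsupp with hi₀
      have hi₀mem : i₀ ∈ d.support := d.support.min'_mem hsupp
      have hdi₀ : d i₀ ≠ 0 := Finsupp.mem_support_iff.mp hi₀mem
      have hmin : ∀ j, j < i₀ → d j = 0 := by
        intro j hj
        by_contra hjne
        exact absurd (d.support.min'_le j (Finsupp.mem_support_iff.mpr hjne))
          (not_le.mpr hj)
      rw [Finset.sum_eq_single i₀]
      · have hle : Finsupp.single i₀ 1 ≤ d := by
          intro j
          rcases eq_or_ne j i₀ with rfl | hne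
          · simpa [Finsupp.single_apply] using Nat.one_le_iff_ne_zero.mpr hdi₀
          · simp [Finsupp.single_apply, hne.symm]
        have hcond : ∀ j, j < i₀ → ((d - Finsupp.single i₀ 1 : Fin n →₀ ℕ)) j = 0 := by
          intro j hj
          simp [Finsupp.tsub_apply, hmin j hj]
        rw [hXmul i₀, if_pos hle, coeff_hAux, if_pos hcond,
          tsub_add_cancel_of_le hle]
      · intro i _ hne
        rw [hXmul i]
        split_ifs with hle
        · rw [coeff_hAux, if_neg]
          intro hcond
          have hdi : d i ≠ 0 := by
            have := hle i
            simp [Finsupp.single_apply] at this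
            omega
          have hi₀le : i₀ ≤ i := d.support.min'_le i (Finsupp.mem_support_iff.mpr hdi)
          have hi₀lt : i₀ < i := lt_of_le_of_ne hi₀le (Ne.symm hne)
          have := hcond i₀ hi₀lt
          rw [Finsupp.tsub_apply, Finsupp.single_apply,
            if_neg (Ne.symm (ne_of_lt hi₀lt))] at this
          omega
        · rfl
      · intro habs
        exact absurd (Finset.mem_univ i₀) habs
  rw [key]
  exact Ideal.sum_mem _ fun i _ =>
    Ideal.mul_mem_right _ _ (Ideal.subset_span ⟨i, rfl⟩)

/-- elements of `J ^ k` have vanishing coefficients in degrees `< k`. -/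
lemma coeff_eq_zero_of_mem_J_pow :
    ∀ (k : ℕ) (g : MvPowerSeries (Fin n) R), g ∈ (J R n) ^ k →
      ∀ d : Fin n →₀ ℕ, deg d < k → coeff d g = 0 := by
  classical
  intro k
  induction k with
  | zero => intro g _ d hd; omega
  | succ k ih =>
    intro g hg d hd
    rw [pow_succ] at hg
    induction hg using Submodule.mul_induction_on' with
    | mem_mul_mem a ha b hb =>
      rw [coeff_mul, Finset.sum_eq_zero]
      rintro ⟨u, v⟩ huv
      rw [Finset.HasAntidiagonal.mem_antidiagonal] at huv
      by_cases hu : deg u < k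
      · rw [ih a ha u hu, zero_mul]
      · have hdeg : deg u + deg v = deg d := by rw [← deg_add, huv]
        have hv : deg v = 0 := by omega
        have hv0 : v = 0 := (deg_eq_zero_iff v).mp hv
        subst hv0
        have : coeff 0 b = 0 := constantCoeff_eq_zero_of_mem_J hb
        rw [this, mul_zero]
    | add x hx y hy ihx ihy =>
      rw [map_add, ihx, ihy, add_zero]

end Stmt9Aux

/-- If `Φ` is a ring endomorphism of `S = R[[x_1,…,x_n]]` with `Φ (X i) = (X i)^p`
for some `p ≥ 2`, then the only solution `f` with zero constant coefficients of the
semilinear fixed point system `f j = ∑ l, A j l * Φ (f l)` is `f = 0`. -/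
theorem stmt_9 {R : Type*} [CommRing R] (n p : ℕ) (hp : 2 ≤ p)
    (Φ : MvPowerSeries (Fin n) R →+* MvPowerSeries (Fin n) R)
    (hΦ : ∀ i : Fin n, Φ (MvPowerSeries.X i) = (MvPowerSeries.X i) ^ p)
    (m : ℕ) (A : Matrix (Fin m) (Fin m) (MvPowerSeries (Fin n) R))
    (f : Fin m → MvPowerSeries (Fin n) R)
    (hf0 : ∀ j : Fin m, MvPowerSeries.constantCoeff (f j) = 0)
    (hfix : ∀ j : Fin m, f j = ∑ l : Fin m, A j l * Φ (f l)) :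
    f = 0 := by
  classical
  set J := Stmt9Aux.J R n with hJ
  -- Φ maps J into J^p
  have hmapJ : Ideal.map Φ J ≤ J ^ p := by
    rw [hJ, Stmt9Aux.J, Ideal.map_span, Ideal.span_le, ← Set.range_comp]
    rintro _ ⟨i, rfl⟩
    simp only [Function.comp_apply, hΦ i]
    exact Ideal.pow_mem_pow
      (show MvPowerSeries.X i ∈ J by rw [hJ, Stmt9Aux.J]; exact Ideal.subset_span ⟨i, rfl⟩) p
  -- f j ∈ J ^ (p ^ k) for every k
  have hpow : ∀ k : ℕ, ∀ j : Fin m, f j ∈ J ^ (p ^ k) := by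
    intro k
    induction k with
    | zero =>
      intro j
      rw [pow_zero, pow_one]
      exact Stmt9Aux.mem_J_of_constantCoeff_eq_zero (hf0 j)
    | succ k ih =>
      intro j
      rw [hfix j]
      refine Ideal.sum_mem _ fun l _ => Ideal.mul_mem_left _ _ ?_
      have h1 : Φ (f l) ∈ Ideal.map Φ (J ^ (p ^ k)) := Ideal.mem_map_of_mem Φ (ih l)
      rw [Ideal.map_pow] at h1
      have h2 : (Ideal.map Φ J) ^ (p ^ k) ≤ (J ^ p) ^ (p ^ k) :=
        Ideal.pow_right_mono hmapJ _
      have h3 : (J ^ p) ^ (p ^ k) = J ^ (p ^ (k + 1)) := by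
        rw [← pow_mul, pow_succ, mul_comm]
      rw [← h3]
      exact h2 h1
  funext j
  ext d
  have hk : Stmt9Aux.deg d < p ^ (Stmt9Aux.deg d + 1) := by
    calc Stmt9Aux.deg d < 2 ^ (Stmt9Aux.deg d + 1) := by
          have := Nat.lt_two_pow_self (n := Stmt9Aux.deg d)
          have h2 : (2:ℕ) ^ Stmt9Aux.deg d ≤ 2 ^ (Stmt9Aux.deg d + 1) :=
            Nat.pow_le_pow_right (by omega) (by omega)
          omega
      _ ≤ p ^ (Stmt9Aux.deg d + 1) := Nat.pow_le_pow_left hp _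
  have := Stmt9Aux.coeff_eq_zero_of_mem_J_pow (p ^ (Stmt9Aux.deg d + 1)) (f j)
    (hpow (Stmt9Aux.deg d + 1) j) d hk
  simpa using this
end

section
/- Let R be a commutative ring, p a prime number, σ : R ≃+* R a ring automorphism, and M an R-module. Let θ : M →ₛₗ[σ] M be a σ-semilinear map and η : M →ₛₗ[σ⁻¹] M a σ⁻¹-semilinear map such that θ(η x) = (p : R) • x and η(θ x) = (p : R) • x for all x ∈ M. Suppose A₁, A₂ are R-submodules of M with IsCompl A₁ A₂, θ(Aᵢ) ⊆ Aᵢ and η(Aᵢ) ⊆ Aᵢ for i = 1, 2. Let V be an R-submodule of M with θ v ∈ V for all v ∈ V and V = (V ⊓ A₁) ⊔ (V ⊓ A₂). For a θ-stable R-submodule V' of M write E(V') := {x ∈ V' | for all q ∈ ℕ, η^[q] x ∈ V'}. Then E(V) = E(V ⊓ A₁) ⊔ E(V ⊓ A₂). -/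
/-- If `M` has semilinear maps `θ`, `η` with `θ ∘ η = η ∘ θ = p • id`, a direct
sum decomposition `A₁ ⊕ A₂` stable under `θ` and `η`, and a `θ`-stable submodule
`V` with `V = (V ⊓ A₁) ⊔ (V ⊓ A₂)`, then the largest submodule
`E(V') = {x ∈ V' | ∀ q, η^[q] x ∈ V'}` satisfies `E(V) = E(V ⊓ A₁) ⊔ E(V ⊓ A₂)`. -/
theorem stmt_12 {R M : Type*} [CommRing R] [AddCommGroup M] [Module R M]
    (p : ℕ) (hp : p.Prime) (σ : R ≃+* R)
    (θ : M →ₛₗ[(σ : R →+* R)] M) (η : M →ₛₗ[(σ.symm : R →+* R)] M)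
    (hθη : ∀ x : M, θ (η x) = (p : R) • x)
    (hηθ : ∀ x : M, η (θ x) = (p : R) • x)
    (A₁ A₂ : Submodule R M) (hA : IsCompl A₁ A₂)
    (hθA₁ : ∀ x ∈ A₁, θ x ∈ A₁) (hηA₁ : ∀ x ∈ A₁, η x ∈ A₁)
    (hθA₂ : ∀ x ∈ A₂, θ x ∈ A₂) (hηA₂ : ∀ x ∈ A₂, η x ∈ A₂)
    (V : Submodule R M) (hV : ∀ v ∈ V, θ v ∈ V)
    (hVsum : V = (V ⊓ A₁) ⊔ (V ⊓ A₂))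
    (EV E₁ E₂ : Submodule R M)
    (hEV : (EV : Set M) = {x | x ∈ V ∧ ∀ q : ℕ, (⇑η)^[q] x ∈ V})
    (hE₁ : (E₁ : Set M) = {x | x ∈ V ⊓ A₁ ∧ ∀ q : ℕ, (⇑η)^[q] x ∈ V ⊓ A₁})
    (hE₂ : (E₂ : Set M) = {x | x ∈ V ⊓ A₂ ∧ ∀ q : ℕ, (⇑η)^[q] x ∈ V ⊓ A₂}) :
    EV = E₁ ⊔ E₂ := by
  have hmemEV : ∀ x, x ∈ EV ↔ x ∈ V ∧ ∀ q : ℕ, (⇑η)^[q] x ∈ V := by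
    intro x
    constructor
    · intro h; have : x ∈ (EV : Set M) := h; rwa [hEV] at this
    · intro h; show x ∈ (EV : Set M); rw [hEV]; exact h
  have hmemE₁ : ∀ x, x ∈ E₁ ↔ x ∈ V ⊓ A₁ ∧ ∀ q : ℕ, (⇑η)^[q] x ∈ V ⊓ A₁ := by
    intro x
    constructor
    · intro h; have : x ∈ (E₁ : Set M) := h; rwa [hE₁] at this
    · intro h; show x ∈ (E₁ : Set M); rw [hE₁]; exact h
  have hmemE₂ : ∀ x, x ∈ E₂ ↔ x ∈ V ⊓ A₂ ∧ ∀ q : ℕ, (⇑η)^[q] x ∈ V ⊓ A₂ := by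
    intro x
    constructor
    · intro h; have : x ∈ (E₂ : Set M) := h; rwa [hE₂] at this
    · intro h; show x ∈ (E₂ : Set M); rw [hE₂]; exact h
  -- iterates of η preserve A₁, A₂ and are additive
  have hiterA₁ : ∀ q : ℕ, ∀ x ∈ A₁, (⇑η)^[q] x ∈ A₁ := by
    intro q
    induction q with
    | zero => intro x hx; simpa using hx
    | succ n ih =>
      intro x hx
      rw [Function.iterate_succ_apply]
      exact ih _ (hηA₁ x hx)
  have hiterA₂ : ∀ q : ℕ, ∀ x ∈ A₂, (⇑η)^[q] x ∈ A₂ := by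
    intro q
    induction q with
    | zero => intro x hx; simpa using hx
    | succ n ih =>
      intro x hx
      rw [Function.iterate_succ_apply]
      exact ih _ (hηA₂ x hx)
  have hiteradd : ∀ q : ℕ, ∀ x y : M, (⇑η)^[q] (x + y) = (⇑η)^[q] x + (⇑η)^[q] y := by
    intro q
    induction q with
    | zero => intro x y; simp
    | succ n ih =>
      intro x y
      simp only [Function.iterate_succ_apply, map_add, ih]
  -- uniqueness of decomposition
  have huniq : ∀ a b c d : M, a ∈ A₁ → b ∈ A₂ → c ∈ A₁ → d ∈ A₂ → a + b = c + d →
      a = c ∧ b = d := by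
    intro a b c d ha hb hc hd h
    have h1 : a - c = d - b := by rw [sub_eq_sub_iff_add_eq_add, h, add_comm]
    have hmem : a - c ∈ A₁ ⊓ A₂ := by
      constructor
      · exact sub_mem ha hc
      · rw [h1]; exact sub_mem hd hb
    rw [hA.inf_eq_bot] at hmem
    have hac : a = c := sub_eq_zero.mp hmem
    subst hac
    exact ⟨rfl, add_left_cancel h⟩
  apply le_antisymm
  · intro x hx
    obtain ⟨hxV, hxq⟩ := (hmemEV x).mp hx
    rw [hVsum] at hxV
    obtain ⟨a, ha, b, hb, rfl⟩ := Submodule.mem_sup.mp hxV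
    -- show a ∈ E₁ and b ∈ E₂
    have key : ∀ q : ℕ, (⇑η)^[q] a ∈ V ⊓ A₁ ∧ (⇑η)^[q] b ∈ V ⊓ A₂ := by
      intro q
      have hq := hxq q
      rw [hVsum] at hq
      obtain ⟨c, hc, d, hd, hcd⟩ := Submodule.mem_sup.mp hq
      rw [hiteradd q a b] at hcd
      obtain ⟨h1, h2⟩ := huniq _ _ _ _ (hiterA₁ q a ha.2) (hiterA₂ q b hb.2) hc.2 hd.2 hcd.symm
      exact ⟨h1 ▸ ⟨hc.1, hc.2⟩, h2 ▸ ⟨hd.1, hd.2⟩⟩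
    refine Submodule.mem_sup.mpr ⟨a, (hmemE₁ a).mpr ⟨ha, fun q => (key q).1⟩,
      b, (hmemE₂ b).mpr ⟨hb, fun q => (key q).2⟩, rfl⟩
  · apply sup_le
    · intro x hx
      obtain ⟨hxV, hxq⟩ := (hmemE₁ x).mp hx
      exact (hmemEV x).mpr ⟨hxV.1, fun q => (hxq q).1⟩
    · intro x hx
      obtain ⟨hxV, hxq⟩ := (hmemE₂ x).mp hx
      exact (hmemEV x).mpr ⟨hxV.1, fun q => (hxq q).1⟩
end
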